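/- Let a₁, a₂ ∈ SL(2,ℂ) with traces t₁, t₂ such that t₁t₂ ≠ 0. Then the commutator a₁a₂a₁⁻¹a₂⁻¹ equals -p (where p = [[1,1],[0,1]]) if and only if there exist α, β ∈ ℂ with a₁ = k_{t₁}(α), a₂⁻¹ = k_{t₂}(β), and t₁⁻¹t₂(α² + 1) + t₁t₂⁻¹(β² + 1) = 2αβ + t₂α - t₁β. -/

import Mathlib

open Matrix

noncomputable def kMat (t α : ℂ) : Matrix (Fin 2) (Fin 2) ℂ :=
  !![α + t / 2, (t ^ 2 / 4 - 1 - α ^ 2) / (2 * t); 2 * t, -α + t / 2]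

/-! Write `A = a₁` and `B = a₂⁻¹`. Conjugation preserves traces, so `A B⁻¹ A⁻¹ B = -p` forces
`tr (-p B⁻¹) = tr B⁻¹` and `tr (-p A⁻¹) = tr A⁻¹`; for a matrix of `SL(2)` this says that its
lower-left entry is twice its trace, which for nonzero trace `t` is exactly the shape `k_t(α)`.
For such `A` and `B` one computes `A B⁻¹ + p B⁻¹ A = δ • [[1, 1/2], [0, 1]]`, where `δ` is the
difference of the two sides of the scalar equation. -/

section CommRing

variable {R : Type*} [CommRing R]

theorem Matrix.inv_fin_two_of_det_eq_one {M : Matrix (Fin 2) (Fin 2) R} (hM : M.det = 1) :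
    M⁻¹ = !![M 1 1, -M 0 1; -M 1 0, M 0 0] := by
  rw [inv_def, hM, Ring.inverse_one, one_smul, adjugate_fin_two]

theorem Matrix.trace_inv_fin_two_of_det_eq_one {M : Matrix (Fin 2) (Fin 2) R} (hM : M.det = 1) :
    M⁻¹.trace = M.trace := by
  simp [inv_fin_two_of_det_eq_one hM, trace_fin_two, add_comm]

theorem trace_neg_parabolic_mul (M : Matrix (Fin 2) (Fin 2) R) :
    (-!![1, 1; 0, 1] * M).trace = -(M.trace + M 1 0) := by
  rw [neg_mul, trace_neg, trace_fin_two, trace_fin_two, mul_apply, mul_apply]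
  simp [Fin.sum_univ_two, add_right_comm]

theorem apply_one_zero_eq_of_trace_neg_parabolic_mul_inv {M : Matrix (Fin 2) (Fin 2) R}
    (hM : M.det = 1) (h : (-!![1, 1; 0, 1] * M⁻¹).trace = M⁻¹.trace) :
    M 1 0 = 2 * M.trace := by
  rw [trace_neg_parabolic_mul, trace_inv_fin_two_of_det_eq_one hM,
    inv_fin_two_of_det_eq_one hM] at h
  simp only [of_apply, cons_val', cons_val_zero, cons_val_one, empty_val',
    cons_val_fin_one] at h
  linear_combination h

theorem commutator_inv_eq_iff_mul_inv_eq {n : Type*} [Fintype n] [DecidableEq n]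
    {A B C : Matrix n n R} (hA : IsUnit A.det) (hB : IsUnit B.det) :
    A * B⁻¹ * A⁻¹ * B = C ↔ A * B⁻¹ = C * (B⁻¹ * A) := by
  constructor
  · rintro rfl
    rw [Matrix.mul_assoc _ B, mul_nonsing_inv_cancel_left _ _ hB,
      nonsing_inv_mul_cancel_right _ _ hA]
  · intro h
    rw [h, Matrix.mul_assoc C, mul_nonsing_inv_cancel_right _ _ hA,
      nonsing_inv_mul_cancel_right _ _ hB]

theorem apply_one_zero_eq_two_mul_trace_of_commutator_inv {A B : Matrix (Fin 2) (Fin 2) R}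
    (hA : A.det = 1) (hB : B.det = 1) (h : A * B⁻¹ * A⁻¹ * B = -!![1, 1; 0, 1]) :
    A 1 0 = 2 * A.trace ∧ B 1 0 = 2 * B.trace := by
  have hA' : IsUnit A.det := hA ▸ isUnit_one
  have hB' : IsUnit B.det := hB ▸ isUnit_one
  constructor
  · refine apply_one_zero_eq_of_trace_neg_parabolic_mul_inv hA ?_
    have hconj : B⁻¹ * A⁻¹ * B = A⁻¹ * -!![1, 1; 0, 1] := by
      rw [← h]; simp [Matrix.mul_assoc, nonsing_inv_mul_cancel_left _ _ hA']
    rw [trace_mul_comm, ← hconj, trace_mul_comm, mul_nonsing_inv_cancel_left _ _ hB']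
  · refine apply_one_zero_eq_of_trace_neg_parabolic_mul_inv hB ?_
    have hconj : A * B⁻¹ * A⁻¹ = -!![1, 1; 0, 1] * B⁻¹ := by
      rw [← h, mul_nonsing_inv_cancel_right _ _ hB']
    rw [← hconj, trace_mul_comm, nonsing_inv_mul_cancel_left _ _ hA']

end CommRing

theorem det_kMat {t α : ℂ} (ht : t ≠ 0) : (kMat t α).det = 1 := by
  rw [kMat, det_fin_two_of]
  field_simp
  ring

theorem eq_kMat_of_apply_one_zero_eq {M : Matrix (Fin 2) (Fin 2) ℂ} (hM : M.det = 1)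
    (ht : M.trace ≠ 0) (h : M 1 0 = 2 * M.trace) :
    M = kMat M.trace ((M 0 0 - M 1 1) / 2) := by
  rw [trace_fin_two] at ht h ⊢
  rw [det_fin_two] at hM
  ext i j
  fin_cases i <;> fin_cases j <;>
    simp only [Fin.zero_eta, Fin.mk_one, Fin.isValue, kMat, of_apply, cons_val', cons_val_zero,
      cons_val_one, cons_val_fin_one]
  · ring
  · field_simp
    linear_combination (-16) * hM - 16 * M 0 1 * h
  · exact h
  · ring

theorem kMat_mul_inv_add_parabolic_mul {t₁ t₂ : ℂ} (ht₁ : t₁ ≠ 0) (ht₂ : t₂ ≠ 0) (α β : ℂ) :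
    kMat t₁ α * (kMat t₂ β)⁻¹ + !![1, 1; 0, 1] * ((kMat t₂ β)⁻¹ * kMat t₁ α) =
      (t₁⁻¹ * t₂ * (α ^ 2 + 1) + t₁ * t₂⁻¹ * (β ^ 2 + 1) - (2 * α * β + t₂ * α - t₁ * β)) •
        !![1, 2⁻¹; 0, 1] := by
  rw [inv_fin_two_of_det_eq_one (det_kMat ht₂)]
  ext i j
  fin_cases i <;> fin_cases j <;> simp [kMat] <;> field_simp <;> ring

theorem commutator_kMat_inv_eq_neg_parabolic_iff {t₁ t₂ : ℂ} (ht₁ : t₁ ≠ 0) (ht₂ : t₂ ≠ 0)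
    (α β : ℂ) :
    kMat t₁ α * (kMat t₂ β)⁻¹ * (kMat t₁ α)⁻¹ * kMat t₂ β = -!![1, 1; 0, 1] ↔
      t₁⁻¹ * t₂ * (α ^ 2 + 1) + t₁ * t₂⁻¹ * (β ^ 2 + 1) = 2 * α * β + t₂ * α - t₁ * β := by
  have hne : !![(1 : ℂ), 2⁻¹; 0, 1] ≠ 0 := fun h => by simpa using congrFun (congrFun h 0) 0
  rw [commutator_inv_eq_iff_mul_inv_eq ((det_kMat ht₁).symm ▸ isUnit_one)
      ((det_kMat ht₂).symm ▸ isUnit_one), neg_mul, eq_neg_iff_add_eq_zero,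
    kMat_mul_inv_add_parabolic_mul ht₁ ht₂, smul_eq_zero, or_iff_left hne, sub_eq_zero]

theorem commutator_inv_eq_neg_parabolic_iff {A B : Matrix (Fin 2) (Fin 2) ℂ} (hA : A.det = 1)
    (hB : B.det = 1) (ht : A.trace * B.trace ≠ 0) :
    A * B⁻¹ * A⁻¹ * B = -!![1, 1; 0, 1] ↔
      ∃ α β : ℂ, A = kMat A.trace α ∧ B = kMat B.trace β ∧
        A.trace⁻¹ * B.trace * (α ^ 2 + 1) + A.trace * B.trace⁻¹ * (β ^ 2 + 1) =
          2 * α * β + B.trace * α - A.trace * β := by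
  obtain ⟨htA, htB⟩ := mul_ne_zero_iff.mp ht
  constructor
  · intro h
    obtain ⟨hA₁₀, hB₁₀⟩ := apply_one_zero_eq_two_mul_trace_of_commutator_inv hA hB h
    have hAk := eq_kMat_of_apply_one_zero_eq hA htA hA₁₀
    have hBk := eq_kMat_of_apply_one_zero_eq hB htB hB₁₀
    rw [hAk, hBk, commutator_kMat_inv_eq_neg_parabolic_iff htA htB] at h
    exact ⟨_, _, hAk, hBk, h⟩
  · rintro ⟨α, β, hAk, hBk, heq⟩
    rw [hAk, hBk]
    exact (commutator_kMat_inv_eq_neg_parabolic_iff htA htB α β).mpr heq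

theorem commutator_neg_parabolic_iff (a₁ a₂ : Matrix (Fin 2) (Fin 2) ℂ) (t₁ t₂ : ℂ)
    (ha₁ : a₁.det = 1) (ha₂ : a₂.det = 1) (ht₁ : a₁.trace = t₁) (ht₂ : a₂.trace = t₂)
    (ht : t₁ * t₂ ≠ 0) :
    a₁ * a₂ * a₁⁻¹ * a₂⁻¹ = -!![1, 1; 0, 1] ↔
      ∃ α β : ℂ, a₁ = kMat t₁ α ∧ a₂⁻¹ = kMat t₂ β ∧
        t₁⁻¹ * t₂ * (α ^ 2 + 1) + t₁ * t₂⁻¹ * (β ^ 2 + 1) =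
          2 * α * β + t₂ * α - t₁ * β := by
  subst ht₁ ht₂
  have hinv : (a₂⁻¹).det = 1 := by rw [det_nonsing_inv, ha₂, Ring.inverse_one]
  have key := commutator_inv_eq_neg_parabolic_iff ha₁ hinv
    (by rwa [trace_inv_fin_two_of_det_eq_one ha₂])
  rwa [nonsing_inv_nonsing_inv _ (ha₂ ▸ isUnit_one), trace_inv_fin_two_of_det_eq_one ha₂] at key
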